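/- Let K be a real-valued function on the closed triangle T = {(x,y) : 0 ≤ y ≤ x ≤ 1} which is C² on T, satisfies K ≥ 0 on T, and satisfies the sign conditions ∂ₓK ≤ 0, ∂ᵧK ≥ 0 and ∂ₓᵧK ≤ 0 at every point of D₋ = {(x,y) : 0 < y < x < 1}. Then for every φ ∈ C_c^∞((0,1)) one has ∫₀¹ ∫₀ˣ K(x,y) φ(y) φ(x) dy dx ≥ 0. -/

import Mathlib

set_option maxHeartbeats 1000000


open MeasureTheory Set intervalIntegral
open Function

/-- The closed lower triangle `T = {(x,y) : 0 ≤ y ≤ x ≤ 1}`. -/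
def lowerTriangle : Set (ℝ × ℝ) := {p | 0 ≤ p.2 ∧ p.2 ≤ p.1 ∧ p.1 ≤ 1}

/-- The open lower triangle `D₋ = {(x,y) : 0 < y < x < 1}`. -/
def lowerTriangleOpen : Set (ℝ × ℝ) := {p | 0 < p.2 ∧ p.2 < p.1 ∧ p.1 < 1}


lemma lowerTriangle_isClosed : IsClosed lowerTriangle := by
  have : lowerTriangle = {p : ℝ × ℝ | 0 ≤ p.2} ∩ ({p | p.2 ≤ p.1} ∩ {p | p.1 ≤ 1}) := by
    ext p; simp [lowerTriangle, and_assoc]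
  rw [this]
  exact ((isClosed_le continuous_const continuous_snd).inter
    ((isClosed_le continuous_snd continuous_fst).inter
      (isClosed_le continuous_fst continuous_const)))

lemma exists_ext (f : ℝ × ℝ → ℝ) (hf : ContinuousOn f lowerTriangle) :
    ∃ g : ℝ × ℝ → ℝ, Continuous g ∧ ∀ p ∈ lowerTriangle, g p = f p := by
  obtain ⟨g, hg⟩ := ContinuousMap.exists_restrict_eq lowerTriangle_isClosed
    ⟨_, hf.restrict⟩
  exact ⟨g, g.continuous, fun p hp => by
    have := congrFun (congrArg ContinuousMap.toFun hg) ⟨p, hp⟩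
    simpa using this⟩

lemma sign_ext (g : ℝ × ℝ → ℝ) (hg : Continuous g)
    (h : ∀ p ∈ lowerTriangleOpen, 0 ≤ g p) :
    ∀ p ∈ lowerTriangle, 0 ≤ g p := by
  rintro ⟨x, y⟩ ⟨h1, h2, h3⟩
  set u : ℕ → ℝ × ℝ := fun n =>
    ((1 - 1/(n+1 : ℝ)) * x + (1/(n+1 : ℝ)) * (2/3),
     (1 - 1/(n+1 : ℝ)) * y + (1/(n+1 : ℝ)) * (1/3)) with hu
  have hε : ∀ n : ℕ, 0 < 1/(n+1 : ℝ) ∧ 1/(n+1 : ℝ) ≤ 1 := by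
    intro n
    constructor
    · positivity
    · rw [div_le_one (by positivity)]; linarith [Nat.cast_nonneg (α := ℝ) n]
  have hmem : ∀ n, u n ∈ lowerTriangleOpen := by
    intro n
    obtain ⟨hε0, hε1⟩ := hε n
    refine ⟨?_, ?_, ?_⟩ <;> simp only [hu] <;> nlinarith
  have htend : Filter.Tendsto u Filter.atTop (nhds (x, y)) := by
    have h0 : Filter.Tendsto (fun n : ℕ => 1/(n+1 : ℝ)) Filter.atTop (nhds 0) :=
      tendsto_one_div_add_atTop_nhds_zero_nat
    have : Filter.Tendsto (fun n : ℕ =>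
        ((1 - 1/(n+1 : ℝ)) * x + (1/(n+1 : ℝ)) * (2/3),
         (1 - 1/(n+1 : ℝ)) * y + (1/(n+1 : ℝ)) * (1/3))) Filter.atTop
        (nhds ((1 - 0) * x + 0 * (2/3), (1 - 0) * y + 0 * (1/3))) := by
      exact (((h0.const_sub 1).mul_const x).add (h0.mul_const _)).prodMk_nhds
        (((h0.const_sub 1).mul_const y).add (h0.mul_const _))
    rw [hu]; convert this using 2 <;> simp
  exact ge_of_tendsto ((hg.tendsto _).comp htend)
    (Filter.Eventually.of_forall fun n => h _ (hmem n))

lemma ftc1 (f : ℝ → ℝ) (hf : Continuous f) (a x : ℝ) :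
    HasDerivAt (fun u => ∫ t in a..u, f t) (f x) x :=
  (hf.integral_hasStrictDerivAt a x).hasDerivAt

lemma ftc2 (F f : ℝ → ℝ) (hF : ∀ x, HasDerivAt F (f x) x) (hf : Continuous f) (a b : ℝ) :
    ∫ x in a..b, f x = F b - F a :=
  integral_eq_sub_of_hasDerivAt (fun x _ => hF x) (hf.intervalIntegrable _ _)

/-- Key one-variable identity. -/
lemma key (φ w : ℝ → ℝ) (hφ : Continuous φ) (hw : Continuous w) (b : ℝ) :
    ∫ x in (0:ℝ)..b, φ x * (∫ y in (0:ℝ)..x, (∫ s in (0:ℝ)..y, w s) * φ y) =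
    (1/2) * ∫ s in (0:ℝ)..b, w s *
      ((∫ t in (0:ℝ)..b, φ t) - ∫ t in (0:ℝ)..s, φ t) ^ 2 := by
  set Φ : ℝ → ℝ := fun x => ∫ t in (0:ℝ)..x, φ t with hΦdef
  set A : ℝ → ℝ := fun y => ∫ s in (0:ℝ)..y, w s with hAdef
  have hΦ : ∀ x, HasDerivAt Φ (φ x) x := ftc1 φ hφ 0
  have hA : ∀ y, HasDerivAt A (w y) y := ftc1 w hw 0
  have hΦc : Continuous Φ := continuous_iff_continuousAt.mpr fun x => (hΦ x).differentiableAt.continuousAt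
  have hAc : Continuous A := continuous_iff_continuousAt.mpr fun y => (hA y).differentiableAt.continuousAt
  set W : ℝ → ℝ := fun x => ∫ t in (0:ℝ)..x, w t * Φ t with hWdef
  set V : ℝ → ℝ := fun x => ∫ t in (0:ℝ)..x, w t * Φ t ^ 2 with hVdef
  have hW : ∀ x, HasDerivAt W (w x * Φ x) x := ftc1 _ (hw.mul hΦc) 0
  have hV : ∀ x, HasDerivAt V (w x * Φ x ^ 2) x := ftc1 _ (hw.mul (hΦc.pow 2)) 0
  have hWc : Continuous W := continuous_iff_continuousAt.mpr fun x => (hW x).differentiableAt.continuousAt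
  have hΦ0 : Φ 0 = 0 := integral_same
  have hA0 : A 0 = 0 := integral_same
  have hW0 : W 0 = 0 := integral_same
  have hV0 : V 0 = 0 := integral_same
  -- step a : inner integral
  have stepa : ∀ x, (∫ y in (0:ℝ)..x, A y * φ y) = Φ x * A x - W x := by
    intro x
    have := ftc2 (fun y => Φ y * A y - W y) (fun y => A y * φ y)
      (fun y => by
        have h1 := ((hΦ y).mul (hA y)).sub (hW y)
        exact h1.congr_deriv (by ring))
      ((hAc.mul hφ)) 0 x
    rw [this, hΦ0, hA0, hW0]; ring
  -- step b: rewrite integrand of LHS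
  have stepb : (fun x => φ x * (∫ y in (0:ℝ)..x, A y * φ y)) =
      fun x => φ x * (Φ x * A x - W x) := by
    funext x; rw [stepa]
  -- step c : evaluate
  have stepc : ∫ x in (0:ℝ)..b, φ x * (Φ x * A x - W x) =
      (1/2) * Φ b ^ 2 * A b - Φ b * W b + (1/2) * V b := by
    have := ftc2 (fun x => (1/2) * Φ x ^ 2 * A x - Φ x * W x + (1/2) * V x)
      (fun x => φ x * (Φ x * A x - W x))
      (fun x => by
        have h1 := ((((hΦ x).pow 2).const_mul (1/2 : ℝ)).mul (hA x)).sub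
            ((hΦ x).mul (hW x)) |>.add ((hV x).const_mul (1/2 : ℝ))
        have heq : φ x * (Φ x * A x - W x) =
            ((1/2) * (2 * Φ x ^ 1 * φ x) * A x + (1/2) * Φ x ^ 2 * w x -
              (φ x * W x + Φ x * (w x * Φ x))) + (1/2) * (w x * Φ x ^ 2) := by ring
        exact h1.congr_deriv (by simp only [Pi.pow_apply]; push_cast; ring))
      (hφ.mul ((hΦc.mul hAc).sub hWc)) 0 b
    rw [this, hΦ0, hA0, hW0, hV0]; ring
  -- step d : RHS expansion
  have stepd : ∫ s in (0:ℝ)..b, w s * (Φ b - Φ s) ^ 2 =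
      Φ b ^ 2 * A b - 2 * Φ b * W b + V b := by
    have hint : ∀ s : ℝ, w s * (Φ b - Φ s) ^ 2 =
        Φ b ^ 2 * w s - 2 * Φ b * (w s * Φ s) + w s * Φ s ^ 2 := fun s => by ring
    rw [intervalIntegral.integral_congr (fun s _ => hint s)]
    rw [intervalIntegral.integral_add
        ((((continuous_const.mul hw)).sub ((continuous_const.mul (hw.mul hΦc)))).intervalIntegrable (u := fun s => Φ b ^ 2 * w s - 2 * Φ b * (w s * Φ s)) _ _)
        ((hw.mul (hΦc.pow 2)).intervalIntegrable (u := fun s => w s * Φ s ^ 2) _ _),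
      intervalIntegral.integral_sub (((continuous_const.mul hw)).intervalIntegrable (u := fun s => Φ b ^ 2 * w s) _ _)
        (((continuous_const.mul (hw.mul hΦc))).intervalIntegrable (u := fun s => 2 * Φ b * (w s * Φ s)) _ _),
      intervalIntegral.integral_const_mul, intervalIntegral.integral_const_mul]
    try ring
  calc ∫ x in (0:ℝ)..b, φ x * (∫ y in (0:ℝ)..x, A y * φ y)
      = ∫ x in (0:ℝ)..b, φ x * (Φ x * A x - W x) := by rw [stepb]
    _ = (1/2) * ∫ s in (0:ℝ)..b, w s * (Φ b - Φ s) ^ 2 := by rw [stepc, stepd]; ring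

/-- Fubini on a rectangle for a globally continuous integrand. -/
lemma rect_fubini (f : ℝ → ℝ → ℝ) (hf : Continuous (uncurry f))
    {a b c d : ℝ} (hab : a ≤ b) (hcd : c ≤ d) :
    ∫ y in a..b, ∫ t in c..d, f y t = ∫ t in c..d, ∫ y in a..b, f y t := by
  have hint : Integrable (uncurry f)
      ((volume.restrict (Ioc a b)).prod (volume.restrict (Ioc c d))) := by
    rw [Measure.prod_restrict]
    have h1 : IntegrableOn (uncurry f) (Icc a b ×ˢ Icc c d) (volume.prod volume) :=
      ContinuousOn.integrableOn_compact (isCompact_Icc.prod isCompact_Icc) hf.continuousOn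
    exact h1.mono_set (prod_mono Ioc_subset_Icc_self Ioc_subset_Icc_self)
  rw [intervalIntegral.integral_of_le hab, intervalIntegral.integral_of_le hcd]
  simp_rw [intervalIntegral.integral_of_le hcd, intervalIntegral.integral_of_le hab]
  exact integral_integral_swap hint

/-- Fubini on the lower triangle for a globally continuous integrand. -/
lemma tri_fubini (F : ℝ → ℝ → ℝ) (hF : Continuous (uncurry F)) :
    ∫ x in (0:ℝ)..1, ∫ t in x..1, F x t = ∫ t in (0:ℝ)..1, ∫ x in (0:ℝ)..t, F x t := by
  set H : ℝ × ℝ → ℝ := fun p => if p.1 ≤ p.2 then F p.1 p.2 else 0 with hHdef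
  have hHmeas : MeasurableSet {p : ℝ × ℝ | p.1 ≤ p.2} :=
    measurableSet_le measurable_fst measurable_snd
  have hHint : Integrable H
      ((volume.restrict (Ioc (0:ℝ) 1)).prod (volume.restrict (Ioc (0:ℝ) 1))) := by
    rw [Measure.prod_restrict]
    have h1 : IntegrableOn (uncurry F) (Icc (0:ℝ) 1 ×ˢ Icc (0:ℝ) 1) (volume.prod volume) :=
      ContinuousOn.integrableOn_compact (isCompact_Icc.prod isCompact_Icc) hF.continuousOn
    have h2 : IntegrableOn (uncurry F) (Ioc (0:ℝ) 1 ×ˢ Ioc (0:ℝ) 1) (volume.prod volume) :=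
      h1.mono_set (prod_mono Ioc_subset_Icc_self Ioc_subset_Icc_self)
    have h3 : IntegrableOn (Set.indicator {p : ℝ × ℝ | p.1 ≤ p.2} (uncurry F))
        (Ioc (0:ℝ) 1 ×ˢ Ioc (0:ℝ) 1) (volume.prod volume) := h2.indicator hHmeas
    apply h3.congr
    filter_upwards with p
    by_cases h : p.1 ≤ p.2 <;>
      simp [hHdef, h, Set.indicator_apply, uncurry]
  have lhs_eq : ∫ x in (0:ℝ)..1, ∫ t in x..1, F x t =
      ∫ x in Ioc (0:ℝ) 1, ∫ t in Ioc (0:ℝ) 1, H (x, t) := by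
    rw [intervalIntegral.integral_of_le (by norm_num : (0:ℝ) ≤ 1)]
    apply setIntegral_congr_fun measurableSet_Ioc
    intro x hx
    have hx1 : x ≤ 1 := hx.2
    dsimp only
    rw [intervalIntegral.integral_of_le hx1]
    have : ∀ t : ℝ, H (x, t) = Set.indicator (Ici x) (F x) t := by
      intro t
      by_cases h : x ≤ t <;> simp [hHdef, Set.indicator_apply, h]
    simp_rw [this]
    rw [setIntegral_indicator measurableSet_Ici]
    have : Ioc (0:ℝ) 1 ∩ Ici x = Icc x 1 := by
      ext t; simp only [mem_inter_iff, mem_Ioc, mem_Ici, mem_Icc]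
      constructor
      · rintro ⟨⟨_, ht1⟩, hxt⟩; exact ⟨hxt, ht1⟩
      · rintro ⟨hxt, ht1⟩; exact ⟨⟨lt_of_lt_of_le hx.1 hxt, ht1⟩, hxt⟩
    rw [this, integral_Icc_eq_integral_Ioc]
  have rhs_eq : ∫ t in (0:ℝ)..1, ∫ x in (0:ℝ)..t, F x t =
      ∫ t in Ioc (0:ℝ) 1, ∫ x in Ioc (0:ℝ) 1, H (x, t) := by
    rw [intervalIntegral.integral_of_le (by norm_num : (0:ℝ) ≤ 1)]
    apply setIntegral_congr_fun measurableSet_Ioc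
    intro t ht
    dsimp only
    rw [intervalIntegral.integral_of_le ht.1.le]
    have : ∀ x : ℝ, H (x, t) = Set.indicator (Iic t) (fun x => F x t) x := by
      intro x
      by_cases h : x ≤ t <;> simp [hHdef, Set.indicator_apply, h]
    simp_rw [this]
    rw [setIntegral_indicator measurableSet_Iic]
    have : Ioc (0:ℝ) 1 ∩ Iic t = Ioc 0 t := by
      ext x; simp only [mem_inter_iff, mem_Ioc, mem_Iic]
      constructor
      · rintro ⟨⟨hx0, _⟩, hxt⟩; exact ⟨hx0, hxt⟩
      · rintro ⟨hx0, hxt⟩; exact ⟨⟨hx0, le_trans hxt ht.2⟩, hxt⟩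
    rw [this]
  rw [lhs_eq, rhs_eq]
  exact integral_integral_swap (f := fun x t => H (x, t)) hHint

/-- FTC-2 with one-sided derivative info on the interior. -/
lemma ftc2_on {F f : ℝ → ℝ} {a b : ℝ} (hab : a ≤ b)
    (hcont : ContinuousOn F (Icc a b))
    (hderiv : ∀ x ∈ Ioo a b, HasDerivAt F (f x) x)
    (hf : Continuous f) :
    ∫ x in a..b, f x = F b - F a :=
  integral_eq_sub_of_hasDeriv_right_of_le hab hcont
    (fun x hx => (hderiv x hx).hasDerivWithinAt) (hf.intervalIntegrable _ _)

/-- If `K ≥ 0` is C² on the closed triangle `T` (partial derivatives `Kx, Ky, Kxy`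
existing within `T` and continuous on `T`) and satisfies the sign conditions
`∂ₓK ≤ 0`, `∂ᵧK ≥ 0`, `∂ₓᵧK ≤ 0` on `D₋`, then
`∫₀¹∫₀ˣ K(x,y) φ(y) φ(x) dy dx ≥ 0` for every `φ ∈ C_c^∞((0,1))`. -/
theorem statement1
    (K Kx Ky Kxy : ℝ → ℝ → ℝ)
    (hKc : ContinuousOn (fun p : ℝ × ℝ => K p.1 p.2) lowerTriangle)
    (hKxc : ContinuousOn (fun p : ℝ × ℝ => Kx p.1 p.2) lowerTriangle)
    (hKyc : ContinuousOn (fun p : ℝ × ℝ => Ky p.1 p.2) lowerTriangle)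
    (hKxyc : ContinuousOn (fun p : ℝ × ℝ => Kxy p.1 p.2) lowerTriangle)
    (hKx : ∀ x y : ℝ, (x, y) ∈ lowerTriangle →
      HasDerivWithinAt (fun x' => K x' y) (Kx x y) (Icc y 1) x)
    (hKy : ∀ x y : ℝ, (x, y) ∈ lowerTriangle →
      HasDerivWithinAt (fun y' => K x y') (Ky x y) (Icc 0 x) y)
    (hKxy : ∀ x y : ℝ, (x, y) ∈ lowerTriangle →
      HasDerivWithinAt (fun y' => Kx x y') (Kxy x y) (Icc 0 x) y)
    (hKnn : ∀ x y : ℝ, (x, y) ∈ lowerTriangle → 0 ≤ K x y)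
    (hsx : ∀ x y : ℝ, (x, y) ∈ lowerTriangleOpen → Kx x y ≤ 0)
    (hsy : ∀ x y : ℝ, (x, y) ∈ lowerTriangleOpen → 0 ≤ Ky x y)
    (hsxy : ∀ x y : ℝ, (x, y) ∈ lowerTriangleOpen → Kxy x y ≤ 0)
    (φ : ℝ → ℝ) (hφ : ContDiff ℝ (⊤ : ℕ∞) φ) (hφs : tsupport φ ⊆ Ioo 0 1) :
    0 ≤ ∫ x in (0:ℝ)..1, ∫ y in (0:ℝ)..x, K x y * φ y * φ x := by
  have hφc : Continuous φ := hφ.continuous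
  obtain ⟨Kx', hKx'c, hKx'eq⟩ := exists_ext _ hKxc
  obtain ⟨Ky', hKy'c, hKy'eq⟩ := exists_ext _ hKyc
  obtain ⟨Kxy', hKxy'c, hKxy'eq⟩ := exists_ext _ hKxyc
  set Φ : ℝ → ℝ := fun x => ∫ t in (0:ℝ)..x, φ t with hΦdef
  have hΦ : ∀ x, HasDerivAt Φ (φ x) x := ftc1 φ hφc 0
  have hΦc : Continuous Φ :=
    continuous_iff_continuousAt.mpr fun x => (hΦ x).differentiableAt.continuousAt
  -- representation 1
  have rep1 : ∀ x y : ℝ, 0 ≤ y → y ≤ x → x ≤ 1 →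
      K x y = K 1 0 + (∫ s in (0:ℝ)..y, Ky' (1, s)) - ∫ t in x..1, Kx' (t, y) := by
    intro x y hy0 hyx hx1
    have e1 : ∫ t in x..1, Kx' (t, y) = K 1 y - K x y := by
      apply ftc2_on (F := fun t => K t y) (f := fun t => Kx' (t, y)) hx1
      · show ContinuousOn ((fun p : ℝ × ℝ => K p.1 p.2) ∘ (fun t => (t, y))) (Icc x 1)
        apply hKc.comp (Continuous.continuousOn (by fun_prop))
        intro t ht
        exact ⟨hy0, le_trans hyx ht.1, ht.2⟩
      · intro t ht
        have hmem : ((t, y) : ℝ × ℝ) ∈ lowerTriangle :=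
          ⟨hy0, le_trans hyx ht.1.le, ht.2.le⟩
        have h := (hKx t y hmem).hasDerivAt
          (Icc_mem_nhds (lt_of_le_of_lt hyx ht.1) ht.2)
        rwa [hKx'eq (t, y) hmem]
      · exact hKx'c.comp (by fun_prop)
    have e2 : ∫ s in (0:ℝ)..y, Ky' (1, s) = K 1 y - K 1 0 := by
      apply ftc2_on (F := fun s => K 1 s) (f := fun s => Ky' (1, s)) hy0
      · show ContinuousOn ((fun p : ℝ × ℝ => K p.1 p.2) ∘ (fun s => ((1:ℝ), s))) (Icc 0 y)
        apply hKc.comp (Continuous.continuousOn (by fun_prop))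
        intro s hs
        exact ⟨hs.1, le_trans hs.2 (le_trans hyx hx1), le_refl 1⟩
      · intro s hs
        have hmem : ((1, s) : ℝ × ℝ) ∈ lowerTriangle :=
          ⟨hs.1.le, le_trans hs.2.le (le_trans hyx hx1), le_refl 1⟩
        have h := (hKy 1 s hmem).hasDerivAt
          (Icc_mem_nhds hs.1 (lt_of_lt_of_le hs.2 (le_trans hyx hx1)))
        rwa [hKy'eq (1, s) hmem]
      · exact hKy'c.comp (by fun_prop)
    rw [e1, e2]; ring
  -- representation 2
  have rep2 : ∀ t y : ℝ, 0 ≤ y → y ≤ t → t ≤ 1 →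
      Kx' (t, y) = Kx' (t, 0) + ∫ s in (0:ℝ)..y, Kxy' (t, s) := by
    intro t y hy0 hyt ht1
    have ht0 : (0:ℝ) ≤ t := le_trans hy0 hyt
    have e : ∫ s in (0:ℝ)..y, Kxy' (t, s) = Kx t y - Kx t 0 := by
      apply ftc2_on (F := fun s => Kx t s) (f := fun s => Kxy' (t, s)) hy0
      · show ContinuousOn ((fun p : ℝ × ℝ => Kx p.1 p.2) ∘ (fun s => (t, s))) (Icc 0 y)
        apply hKxc.comp (Continuous.continuousOn (by fun_prop))
        intro s hs
        exact ⟨hs.1, le_trans hs.2 hyt, ht1⟩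
      · intro s hs
        have hmem : ((t, s) : ℝ × ℝ) ∈ lowerTriangle :=
          ⟨hs.1.le, le_trans hs.2.le hyt, ht1⟩
        have h := (hKxy t s hmem).hasDerivAt
          (Icc_mem_nhds hs.1 (lt_of_lt_of_le hs.2 hyt))
        rwa [hKxy'eq (t, s) hmem]
      · exact hKxy'c.comp (by fun_prop)
    rw [e, hKx'eq (t, y) ⟨hy0, hyt, ht1⟩, hKx'eq (t, 0) ⟨le_refl 0, ht0, ht1⟩]
    ring
  -- sign facts
  have hsub : lowerTriangleOpen ⊆ lowerTriangle :=
    fun p hp => ⟨hp.1.le, hp.2.1.le, hp.2.2.le⟩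
  have c0nn : 0 ≤ K 1 0 := hKnn 1 0 ⟨le_refl 0, zero_le_one, le_refl 1⟩
  have sKy : ∀ p ∈ lowerTriangle, 0 ≤ Ky' p :=
    sign_ext Ky' hKy'c (fun p hp => by
      rw [hKy'eq p (hsub hp)]; exact hsy p.1 p.2 hp)
  have sKx : ∀ p ∈ lowerTriangle, Kx' p ≤ 0 := by
    have h := sign_ext (fun p => -Kx' p) hKx'c.neg (fun p hp => by
      simp only [neg_nonneg]
      rw [hKx'eq p (hsub hp)]; exact hsx p.1 p.2 hp)
    intro p hp; have := h p hp; simpa [neg_nonneg] using this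
  have sKxy : ∀ p ∈ lowerTriangle, Kxy' p ≤ 0 := by
    have h := sign_ext (fun p => -Kxy' p) hKxy'c.neg (fun p hp => by
      simp only [neg_nonneg]
      rw [hKxy'eq p (hsub hp)]; exact hsxy p.1 p.2 hp)
    intro p hp; have := h p hp; simpa [neg_nonneg] using this
  -- continuity facts
  have hAc : Continuous (fun y : ℝ => ∫ s in (0:ℝ)..y, Ky' (1, s)) :=
    continuous_iff_continuousAt.mpr fun y =>
      (ftc1 _ (hKy'c.comp (by fun_prop)) 0 y).differentiableAt.continuousAt
  have hg2 : Continuous (fun p : ℝ × ℝ => ∫ y in (0:ℝ)..p.2, Kx' (p.1, y) * φ y) := by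
    apply continuous_parametric_intervalIntegral_of_continuous
      (f := fun (p : ℝ × ℝ) y => Kx' (p.1, y) * φ y) (s := fun p : ℝ × ℝ => p.2)
    · show Continuous fun q : (ℝ × ℝ) × ℝ => Kx' (q.1.1, q.2) * φ q.2
      fun_prop
    · exact continuous_snd
  -- inner rewrite
  have inner_eq : ∀ x ∈ Icc (0:ℝ) 1,
      (∫ y in (0:ℝ)..x, K x y * φ y * φ x)
      = φ x * (K 1 0 * Φ x)
        + φ x * (∫ y in (0:ℝ)..x, (∫ s in (0:ℝ)..y, Ky' (1, s)) * φ y)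
        - φ x * (∫ t in x..1, ∫ y in (0:ℝ)..x, Kx' (t, y) * φ y) := by
    intro x hx
    have h0x : (0:ℝ) ≤ x := hx.1
    have hx1 : x ≤ 1 := hx.2
    have hCy : Continuous (fun y : ℝ => ∫ t in x..1, Kx' (t, y) * φ y) := by
      apply continuous_parametric_intervalIntegral_of_continuous'
        (f := fun (y : ℝ) t => Kx' (t, y) * φ y)
      show Continuous fun q : ℝ × ℝ => Kx' (q.2, q.1) * φ q.1
      fun_prop
    have step1 : (∫ y in (0:ℝ)..x, K x y * φ y * φ x)
        = ∫ y in (0:ℝ)..x, (φ x * (K 1 0 * φ y)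
            + φ x * ((∫ s in (0:ℝ)..y, Ky' (1, s)) * φ y)
            - φ x * (∫ t in x..1, Kx' (t, y) * φ y)) := by
      apply intervalIntegral.integral_congr
      intro y hy
      rw [uIcc_of_le h0x] at hy
      dsimp only
      rw [rep1 x y hy.1 hy.2 hx1, intervalIntegral.integral_mul_const]
      ring
    have h1int : IntervalIntegrable (fun y => φ x * (K 1 0 * φ y)) volume 0 x :=
      (continuous_const.mul (continuous_const.mul hφc)).intervalIntegrable _ _
    have h2int : IntervalIntegrable
        (fun y => φ x * ((∫ s in (0:ℝ)..y, Ky' (1, s)) * φ y)) volume 0 x :=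
      (continuous_const.mul (hAc.mul hφc)).intervalIntegrable _ _
    have h3int : IntervalIntegrable
        (fun y => φ x * (∫ t in x..1, Kx' (t, y) * φ y)) volume 0 x :=
      (continuous_const.mul hCy).intervalIntegrable _ _
    have e1 : ∫ y in (0:ℝ)..x, φ x * (K 1 0 * φ y) = φ x * (K 1 0 * Φ x) := by
      rw [intervalIntegral.integral_const_mul, intervalIntegral.integral_const_mul]
    have e2 : ∫ y in (0:ℝ)..x, φ x * ((∫ s in (0:ℝ)..y, Ky' (1, s)) * φ y)
        = φ x * (∫ y in (0:ℝ)..x, (∫ s in (0:ℝ)..y, Ky' (1, s)) * φ y) :=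
      intervalIntegral.integral_const_mul _ _
    have e3 : ∫ y in (0:ℝ)..x, φ x * (∫ t in x..1, Kx' (t, y) * φ y)
        = φ x * (∫ t in x..1, ∫ y in (0:ℝ)..x, Kx' (t, y) * φ y) := by
      rw [intervalIntegral.integral_const_mul,
        rect_fubini (fun y t => Kx' (t, y) * φ y)
          (by show Continuous fun q : ℝ × ℝ => Kx' (q.2, q.1) * φ q.1; fun_prop) h0x hx1]
    rw [step1, intervalIntegral.integral_sub (h1int.add h2int) h3int,
      intervalIntegral.integral_add h1int h2int, e1, e2, e3]
  -- outer split
  have hPc : Continuous (fun x : ℝ =>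
      ∫ y in (0:ℝ)..x, (∫ s in (0:ℝ)..y, Ky' (1, s)) * φ y) :=
    continuous_iff_continuousAt.mpr fun x =>
      (ftc1 _ (hAc.mul hφc) 0 x).differentiableAt.continuousAt
  have hT3c : Continuous (fun x : ℝ =>
      ∫ t in x..1, ∫ y in (0:ℝ)..x, Kx' (t, y) * φ y) := by
    have huncurry : Continuous fun q : ℝ × ℝ => ∫ y in (0:ℝ)..q.1, Kx' (q.2, y) * φ y := by
      apply continuous_parametric_intervalIntegral_of_continuous (μ := volume)
        (f := fun (q : ℝ × ℝ) y => Kx' (q.2, y) * φ y) (s := fun q : ℝ × ℝ => q.1)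
      · show Continuous fun r : (ℝ × ℝ) × ℝ => Kx' (r.1.2, r.2) * φ r.2
        fun_prop
      · exact continuous_fst
    have h := continuous_parametric_intervalIntegral_of_continuous (μ := volume)
      (f := fun (u : ℝ) t => ∫ y in (0:ℝ)..u, Kx' (t, y) * φ y) (a₀ := (1:ℝ))
      (by exact huncurry) continuous_id
    have heq : (fun x : ℝ => ∫ t in x..1, ∫ y in (0:ℝ)..x, Kx' (t, y) * φ y)
        = fun x : ℝ => -∫ t in (1:ℝ)..x, ∫ y in (0:ℝ)..x, Kx' (t, y) * φ y := by
      funext x; rw [intervalIntegral.integral_symm]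
    rw [heq]
    exact h.neg
  have h1int : IntervalIntegrable (fun x => φ x * (K 1 0 * Φ x)) volume 0 1 :=
    (hφc.mul (continuous_const.mul hΦc)).intervalIntegrable _ _
  have h2int : IntervalIntegrable (fun x => φ x *
      (∫ y in (0:ℝ)..x, (∫ s in (0:ℝ)..y, Ky' (1, s)) * φ y)) volume 0 1 :=
    (hφc.mul hPc).intervalIntegrable _ _
  have h3int : IntervalIntegrable (fun x => φ x *
      (∫ t in x..1, ∫ y in (0:ℝ)..x, Kx' (t, y) * φ y)) volume 0 1 :=
    (hφc.mul hT3c).intervalIntegrable _ _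
  have split : (∫ x in (0:ℝ)..1, ∫ y in (0:ℝ)..x, K x y * φ y * φ x)
      = (∫ x in (0:ℝ)..1, φ x * (K 1 0 * Φ x))
        + (∫ x in (0:ℝ)..1, φ x *
            (∫ y in (0:ℝ)..x, (∫ s in (0:ℝ)..y, Ky' (1, s)) * φ y))
        - (∫ x in (0:ℝ)..1, φ x *
            (∫ t in x..1, ∫ y in (0:ℝ)..x, Kx' (t, y) * φ y)) := by
    rw [intervalIntegral.integral_congr
      (fun x hx => inner_eq x (by rwa [uIcc_of_le zero_le_one] at hx))]
    rw [intervalIntegral.integral_sub (h1int.add h2int) h3int,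
      intervalIntegral.integral_add h1int h2int]
  -- term 1
  have hT1 : ∫ x in (0:ℝ)..1, φ x * (K 1 0 * Φ x) = K 1 0 / 2 * Φ 1 ^ 2 := by
    have h := ftc2 (fun x => K 1 0 / 2 * Φ x ^ 2) (fun x => φ x * (K 1 0 * Φ x))
      (fun x => by
        have h := ((hΦ x).pow 2).const_mul (K 1 0 / 2)
        exact h.congr_deriv (by push_cast; ring))
      (hφc.mul (continuous_const.mul hΦc)) 0 1
    rw [h]
    have hΦ0 : Φ 0 = 0 := integral_same
    rw [hΦ0]; ring
  have hT1nn : 0 ≤ ∫ x in (0:ℝ)..1, φ x * (K 1 0 * Φ x) := by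
    rw [hT1]; positivity
  -- term 2
  have hT2 : 0 ≤ ∫ x in (0:ℝ)..1, φ x *
      (∫ y in (0:ℝ)..x, (∫ s in (0:ℝ)..y, Ky' (1, s)) * φ y) := by
    rw [key φ (fun s => Ky' (1, s)) hφc (hKy'c.comp (by fun_prop)) 1]
    apply mul_nonneg (by norm_num)
    apply intervalIntegral.integral_nonneg zero_le_one
    intro s hs
    exact mul_nonneg (sKy (1, s) ⟨hs.1, hs.2, le_refl 1⟩) (sq_nonneg _)
  -- term 3
  have hT3 : (∫ x in (0:ℝ)..1, φ x *
      (∫ t in x..1, ∫ y in (0:ℝ)..x, Kx' (t, y) * φ y)) ≤ 0 := by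
    have hswap : (∫ x in (0:ℝ)..1, φ x *
        (∫ t in x..1, ∫ y in (0:ℝ)..x, Kx' (t, y) * φ y))
        = ∫ t in (0:ℝ)..1, ∫ x in (0:ℝ)..t,
            φ x * (∫ y in (0:ℝ)..x, Kx' (t, y) * φ y) := by
      have h1 : ∀ x : ℝ, φ x * (∫ t in x..1, ∫ y in (0:ℝ)..x, Kx' (t, y) * φ y)
          = ∫ t in x..1, φ x * (∫ y in (0:ℝ)..x, Kx' (t, y) * φ y) :=
        fun x => (intervalIntegral.integral_const_mul _ _).symm
      simp_rw [h1]
      apply tri_fubini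
      show Continuous fun q : ℝ × ℝ => φ q.1 * ∫ y in (0:ℝ)..q.1, Kx' (q.2, y) * φ y
      apply (hφc.comp continuous_fst).mul
      apply continuous_parametric_intervalIntegral_of_continuous (μ := volume)
        (f := fun (q : ℝ × ℝ) y => Kx' (q.2, y) * φ y) (s := fun q : ℝ × ℝ => q.1)
      · show Continuous fun r : (ℝ × ℝ) × ℝ => Kx' (r.1.2, r.2) * φ r.2
        fun_prop
      · exact continuous_fst
    rw [hswap]
    have hQ : ∀ t ∈ Icc (0:ℝ) 1,
        (∫ x in (0:ℝ)..t, φ x * (∫ y in (0:ℝ)..x, Kx' (t, y) * φ y)) ≤ 0 := by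
      intro t ht
      have ht0 : (0:ℝ) ≤ t := ht.1
      have ht1 : t ≤ 1 := ht.2
      have hAtc : Continuous (fun y : ℝ => ∫ s in (0:ℝ)..y, Kxy' (t, s)) :=
        continuous_iff_continuousAt.mpr fun y =>
          (ftc1 _ (hKxy'c.comp (by fun_prop)) 0 y).differentiableAt.continuousAt
      have hq1int : IntervalIntegrable (fun x => φ x * (Kx' (t, 0) * Φ x)) volume 0 t :=
        (hφc.mul (continuous_const.mul hΦc)).intervalIntegrable _ _
      have hq2int : IntervalIntegrable (fun x => φ x *
          (∫ y in (0:ℝ)..x, (∫ s in (0:ℝ)..y, Kxy' (t, s)) * φ y)) volume 0 t := by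
        apply Continuous.intervalIntegrable
        apply hφc.mul
        exact continuous_iff_continuousAt.mpr fun x =>
          (ftc1 _ (hAtc.mul hφc) 0 x).differentiableAt.continuousAt
      have hcongr : (∫ x in (0:ℝ)..t, φ x * (∫ y in (0:ℝ)..x, Kx' (t, y) * φ y))
          = ∫ x in (0:ℝ)..t, (φ x * (Kx' (t, 0) * Φ x)
              + φ x * (∫ y in (0:ℝ)..x, (∫ s in (0:ℝ)..y, Kxy' (t, s)) * φ y)) := by
        apply intervalIntegral.integral_congr
        intro x hx
        rw [uIcc_of_le ht0] at hx
        beta_reduce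
        have hinner : (∫ y in (0:ℝ)..x, Kx' (t, y) * φ y)
            = ∫ y in (0:ℝ)..x, (Kx' (t, 0) * φ y
                + (∫ s in (0:ℝ)..y, Kxy' (t, s)) * φ y) := by
          apply intervalIntegral.integral_congr
          intro y hy
          rw [uIcc_of_le hx.1] at hy
          dsimp only
          rw [rep2 t y hy.1 (le_trans hy.2 hx.2) ht1]
          ring
        rw [hinner, intervalIntegral.integral_add
          ((continuous_const.mul hφc).intervalIntegrable (u := fun y => Kx' (t, 0) * φ y) _ _)
          ((hAtc.mul hφc).intervalIntegrable (u := fun y => (∫ s in (0:ℝ)..y, Kxy' (t, s)) * φ y) _ _),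
          intervalIntegral.integral_const_mul]
        ring
      rw [hcongr, intervalIntegral.integral_add hq1int hq2int]
      have hq1 : (∫ x in (0:ℝ)..t, φ x * (Kx' (t, 0) * Φ x)) ≤ 0 := by
        have h := ftc2 (fun x => Kx' (t, 0) / 2 * Φ x ^ 2)
          (fun x => φ x * (Kx' (t, 0) * Φ x))
          (fun x => by
            have h := ((hΦ x).pow 2).const_mul (Kx' (t, 0) / 2)
            exact h.congr_deriv (by push_cast; ring))
          (hφc.mul (continuous_const.mul hΦc)) 0 t
        rw [h]
        have hΦ0 : Φ 0 = 0 := integral_same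
        rw [hΦ0]
        have hle : Kx' (t, 0) ≤ 0 := sKx (t, 0) ⟨le_refl 0, ht0, ht1⟩
        nlinarith [sq_nonneg (Φ t)]
      have hq2 : (∫ x in (0:ℝ)..t, φ x *
          (∫ y in (0:ℝ)..x, (∫ s in (0:ℝ)..y, Kxy' (t, s)) * φ y)) ≤ 0 := by
        rw [key φ (fun s => Kxy' (t, s)) hφc (hKxy'c.comp (by fun_prop)) t]
        have : 0 ≤ ∫ s in (0:ℝ)..t, -(Kxy' (t, s) *
            ((∫ u in (0:ℝ)..t, φ u) - ∫ u in (0:ℝ)..s, φ u) ^ 2) := by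
          apply intervalIntegral.integral_nonneg ht0
          intro s hs
          have hle : Kxy' (t, s) ≤ 0 := sKxy (t, s) ⟨hs.1, hs.2, ht1⟩
          nlinarith [sq_nonneg ((∫ u in (0:ℝ)..t, φ u) - ∫ u in (0:ℝ)..s, φ u)]
        rw [intervalIntegral.integral_neg] at this
        nlinarith
      linarith
    have : 0 ≤ ∫ t in (0:ℝ)..1, -(∫ x in (0:ℝ)..t,
        φ x * (∫ y in (0:ℝ)..x, Kx' (t, y) * φ y)) := by
      apply intervalIntegral.integral_nonneg zero_le_one
      intro t ht
      have := hQ t ht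
      linarith
    rw [intervalIntegral.integral_neg] at this
    linarith
  rw [split]
  linarith
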